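/- arXiv:1606.03954 — 3 statements merged into one kernel-verified Lean document; each statement's English description precedes it below -/
import Mathlib

section
/- Let A be a real N×N matrix all of whose complex eigenvalues have negative real part (A is Hurwitz). Then there exist constants c > 0 and α > 0 such that for all t ≥ 0, the operator norm of the matrix exponential satisfies ‖exp(tA)‖ ≤ c·exp(−α t). In particular exp(tA) → 0 as t → ∞. -/
open Matrix NormedSpace Filter

open scoped Matrix.Norms.L2Operator

/-- `A` is Hurwitz: every complex eigenvalue of `A` has strictly negative real part. -/
def IsHurwitz {N : ℕ} (A : Matrix (Fin N) (Fin N) ℝ) : Prop :=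
  ∀ μ ∈ spectrum ℂ (A.map Complex.ofReal), μ.re < 0

/-!
Every eigenvalue of `exp A` is `exp μ` for an eigenvalue `μ` of `A`: the commuting matrices `A` and
`exp A` have a common eigenvector. For Hurwitz `A` the spectrum of `exp A` thus lies in the open unit
disc, and Gelfand's formula gives `exp A ^ k → 0`, so `‖exp (T • A)‖ < 1` for some `T > 0`. Writing
`t = s + k T` with `s ∈ [0, T]`, the semigroup law `exp (t • A) = exp (s • A) * exp (T • A) ^ k`
turns this into exponential decay.
-/

open Topology

theorem Module.End.HasEigenvalue.exists_hasEigenvector_of_commute {K V : Type*} [Field K]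
    [IsAlgClosed K] [AddCommGroup V] [Module K V] [FiniteDimensional K V]
    {f g : Module.End K V} (hfg : Commute f g) {a : K} (ha : f.HasEigenvalue a) :
    ∃ b v, f.HasEigenvector a v ∧ g.HasEigenvector b v := by
  have hmaps := Module.End.mapsTo_genEigenspace_of_comm hfg a 1
  have : Nontrivial (f.eigenspace a) := Submodule.nontrivial_iff_ne_bot.mpr ha
  obtain ⟨b, hb⟩ := Module.End.exists_eigenvalue (g.restrict hmaps)
  obtain ⟨w, hw⟩ := hb.exists_hasEigenvector
  have hw0 : (w : V) ≠ 0 := by simpa using hw.2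
  refine ⟨b, w, ⟨w.2, hw0⟩, ⟨?_, hw0⟩⟩
  exact Module.End.mem_eigenspace_iff.mpr (congrArg Subtype.val hw.apply_eq_smul)

theorem Matrix.exp_mulVec_of_mulVec_eq_smul {n 𝕂 : Type*} [Fintype n] [DecidableEq n] [RCLike 𝕂]
    {M : Matrix n n 𝕂} {μ : 𝕂} {w : n → 𝕂} (h : M *ᵥ w = μ • w) : exp M *ᵥ w = exp μ • w := by
  have hpow (k : ℕ) : M ^ k *ᵥ w = μ ^ k • w := by
    induction k with
    | zero => simp
    | succ k ih => rw [pow_succ, ← mulVec_mulVec, h, mulVec_smul, ih, smul_smul, pow_succ']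
  have hM := (exp_series_hasSum_exp' (𝕂 := 𝕂) M).map (mulVec.addMonoidHomLeft w)
    (continuous_id.matrix_mulVec continuous_const)
  refine hM.unique ?_
  convert (exp_series_hasSum_exp' (𝕂 := 𝕂) μ).smul_const w using 2 with k
  simp [mulVec.addMonoidHomLeft, smul_mulVec, hpow, smul_smul]

theorem Matrix.spectrum_exp_subset {n : Type*} [Fintype n] [DecidableEq n] (M : Matrix n n ℂ) :
    spectrum ℂ (exp M) ⊆ Complex.exp '' spectrum ℂ M := by
  intro a ha
  rw [← spectrum_toLin', ← Module.End.hasEigenvalue_iff_mem_spectrum] at ha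
  have hcomm : Commute (toLin' (exp M)) (toLin' M) :=
    (Commute.refl M).exp_left.map (toLinAlgEquiv' (R := ℂ) (n := n))
  obtain ⟨b, v, hav, hbv⟩ := ha.exists_hasEigenvector_of_commute hcomm
  refine ⟨b, ?_, ?_⟩
  · rw [← spectrum_toLin', ← Module.End.hasEigenvalue_iff_mem_spectrum]
    exact Module.End.hasEigenvalue_of_hasEigenvector hbv
  · have hexp : exp M *ᵥ v = exp b • v := exp_mulVec_of_mulVec_eq_smul hbv.apply_eq_smul
    rw [Complex.exp_eq_exp_ℂ]
    exact smul_left_injective ℂ hbv.2 (hexp.symm.trans hav.apply_eq_smul)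

theorem tendsto_pow_atTop_nhds_zero_of_spectrum_norm_lt_one {A : Type*} [NormedRing A]
    [NormedAlgebra ℂ A] [CompleteSpace A] {a : A} (ha : ∀ z ∈ spectrum ℂ a, ‖z‖ < 1) :
    Tendsto (a ^ ·) atTop (𝓝 0) := by
  rcases subsingleton_or_nontrivial A with hA | hA
  · exact tendsto_const_nhds.congr fun k => Subsingleton.elim _ _
  have hρ : spectralRadius ℂ a < 1 := by
    simpa using spectrum.spectralRadius_lt_of_forall_lt a (r := 1)
      fun z hz => by exact_mod_cast ha z hz
  obtain ⟨q, hq0, hρq, hq1⟩ := ENNReal.lt_iff_exists_real_btwn.mp hρ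
  have hbound : ∀ᶠ k : ℕ in atTop, ‖a ^ k‖ ≤ q ^ k := by
    filter_upwards [(spectrum.pow_norm_pow_one_div_tendsto_nhds_spectralRadius a).eventually_lt_const
      hρq, eventually_ge_atTop 1] with k hk hk1
    have hk' : ‖a ^ k‖ ^ (1 / k : ℝ) < q :=
      (ENNReal.ofReal_lt_ofReal_iff_of_nonneg (by positivity)).mp hk
    calc ‖a ^ k‖ = (‖a ^ k‖ ^ (1 / k : ℝ)) ^ k := by
          rw [one_div, Real.rpow_inv_natCast_pow (norm_nonneg _) (by omega)]
      _ ≤ q ^ k := pow_le_pow_left₀ (by positivity) hk'.le k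
  exact squeeze_zero_norm' hbound (tendsto_pow_atTop_nhds_zero_of_lt_one hq0 (by simpa using hq1))

theorem norm_mul_pow_le {R : Type*} [SeminormedRing R] (x y : R) (k : ℕ) :
    ‖x * y ^ k‖ ≤ ‖x‖ * ‖y‖ ^ k := by
  induction k with
  | zero => simp
  | succ k ih =>
    rw [pow_succ, ← mul_assoc, pow_succ, ← mul_assoc]
    exact (norm_mul_le _ _).trans (mul_le_mul_of_nonneg_right ih (norm_nonneg y))

theorem Real.pow_floor_div_le_inv_mul_exp {r : ℝ} (hr0 : 0 < r) (hr1 : r ≤ 1) (t T : ℝ) :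
    r ^ ⌊t / T⌋₊ ≤ r⁻¹ * Real.exp (Real.log r / T * t) := by
  have hk : t / T - 1 ≤ ⌊t / T⌋₊ := by linarith [Nat.lt_floor_add_one (t / T)]
  calc r ^ ⌊t / T⌋₊ = r ^ (⌊t / T⌋₊ : ℝ) := (Real.rpow_natCast _ _).symm
    _ ≤ r ^ (t / T - 1) := Real.rpow_le_rpow_of_exponent_ge hr0 hr1 hk
    _ = r⁻¹ * Real.exp (Real.log r / T * t) := by
      rw [Real.rpow_sub hr0, Real.rpow_one, Real.rpow_def_of_pos hr0]
      field_simp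

section RealBanachAlgebra

variable {𝔸 : Type*} [NormedRing 𝔸] [NormedAlgebra ℝ 𝔸] [CompleteSpace 𝔸]

theorem exp_add_natCast_mul_smul (a : 𝔸) (s T : ℝ) (k : ℕ) :
    exp ((s + k * T) • a) = exp (s • a) * exp (T • a) ^ k := by
  let : NormedAlgebra ℚ 𝔸 := .restrictScalars ℚ ℝ 𝔸
  rw [add_smul, NormedSpace.exp_add_of_commute (((Commute.refl a).smul_left _).smul_right _),
    mul_smul, Nat.cast_smul_eq_nsmul, NormedSpace.exp_nsmul]

theorem exists_norm_exp_smul_le_of_norm_exp_smul_lt_one {a : 𝔸} {T : ℝ} (hT : 0 < T)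
    (ha : ‖exp (T • a)‖ < 1) :
    ∃ c > (0 : ℝ), ∃ α > (0 : ℝ), ∀ t : ℝ, 0 ≤ t → ‖exp (t • a)‖ ≤ c * Real.exp (-α * t) := by
  let : NormedAlgebra ℚ 𝔸 := .restrictScalars ℚ ℝ 𝔸
  have hcont : Continuous fun s : ℝ => exp (s • a) :=
    exp_continuous.comp (continuous_id.smul continuous_const)
  obtain ⟨C, hC⟩ :=
    (isCompact_Icc (a := 0) (b := T)).exists_bound_of_continuousOn hcont.continuousOn
  -- `Real.log r` needs `r > 0`, and `exp (T • a) = 0` in the zero algebra.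
  set r := max ‖exp (T • a)‖ (1 / 2)
  have hr0 : 0 < r := lt_max_of_lt_right (by norm_num)
  have hr1 : r < 1 := max_lt ha (by norm_num)
  refine ⟨max C 1 / r, by positivity, -Real.log r / T,
    div_pos (neg_pos.mpr (Real.log_neg hr0 hr1)) hT, fun t ht => ?_⟩
  set k := ⌊t / T⌋₊
  have hkt : k * T ≤ t := (le_div_iff₀ hT).mp (Nat.floor_le (by positivity))
  have htk : t < k * T + T := by
    have := Nat.lt_floor_add_one (t / T)
    rw [div_lt_iff₀ hT] at this
    linarith
  have hsplit : exp (t • a) = exp ((t - k * T) • a) * exp (T • a) ^ k := by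
    rw [← exp_add_natCast_mul_smul, sub_add_cancel]
  calc ‖exp (t • a)‖ ≤ ‖exp ((t - k * T) • a)‖ * ‖exp (T • a)‖ ^ k :=
        hsplit ▸ norm_mul_pow_le _ _ _
    _ ≤ max C 1 * r ^ k := by
        gcongr
        · exact (hC _ ⟨by linarith, by linarith⟩).trans (le_max_left _ _)
        · exact le_max_left _ _
    _ ≤ max C 1 * (r⁻¹ * Real.exp (Real.log r / T * t)) := by
        gcongr
        exact Real.pow_floor_div_le_inv_mul_exp hr0 hr1.le t T
    _ = max C 1 / r * Real.exp (-(-Real.log r / T) * t) := by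
        rw [neg_div, neg_neg]
        ring

end RealBanachAlgebra

theorem Matrix.exp_map_ofReal {n : Type*} [Fintype n] [DecidableEq n] (A : Matrix n n ℝ) :
    exp (A.map Complex.ofReal) = (exp A).map Complex.ofReal := by
  let : NormedAlgebra ℚ (Matrix n n ℝ) := .restrictScalars ℚ ℝ _
  exact (map_exp Complex.ofRealHom.mapMatrix
    (continuous_id.matrix_map Complex.continuous_ofReal) A).symm

theorem Matrix.tendsto_exp_pow_atTop_nhds_zero {n : Type*} [Fintype n] [DecidableEq n]
    {A : Matrix n n ℝ} (hA : ∀ μ ∈ spectrum ℂ (A.map Complex.ofReal), μ.re < 0) :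
    Tendsto (exp A ^ ·) atTop (𝓝 0) := by
  have hspec : ∀ z ∈ spectrum ℂ (exp (A.map Complex.ofReal)), ‖z‖ < 1 := by
    rintro _ hz
    obtain ⟨μ, hμ, rfl⟩ := spectrum_exp_subset _ hz
    simpa [Complex.norm_exp] using hA μ hμ
  have hre (k : ℕ) : ((exp A).map Complex.ofReal ^ k).map Complex.re = exp A ^ k := by
    have : (exp A).map Complex.ofReal ^ k = (exp A ^ k).map Complex.ofReal :=
      (Complex.ofRealHom.mapMatrix.map_pow (exp A) k).symm
    ext
    simp [this]
  have := ((continuous_id.matrix_map Complex.continuous_re).tendsto 0).comp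
    (tendsto_pow_atTop_nhds_zero_of_spectrum_norm_lt_one hspec)
  simpa [Function.comp_def, exp_map_ofReal, hre] using this

/-- If `A` is Hurwitz, then `‖exp (t A)‖ ≤ c ⬝ exp (-α t)` for some `c, α > 0`
(operator norm), and in particular `exp (t A) → 0` as `t → ∞`. -/
theorem exp_decay_of_hurwitz {N : ℕ} (A : Matrix (Fin N) (Fin N) ℝ)
    (hA : IsHurwitz A) :
    (∃ c > (0 : ℝ), ∃ α > (0 : ℝ), ∀ t : ℝ, 0 ≤ t →
        ‖exp (t • A)‖ ≤ c * Real.exp (-α * t)) ∧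
      Tendsto (fun t : ℝ => exp (t • A)) atTop (nhds 0) := by
  obtain ⟨k, hk, hk1⟩ := (((tendsto_exp_pow_atTop_nhds_zero hA).norm.eventually
    (gt_mem_nhds (by simp : ‖(0 : Matrix (Fin N) (Fin N) ℝ)‖ < 1))).and
    (eventually_ge_atTop 1)).exists
  obtain ⟨c, hc, α, hα, hbound⟩ := exists_norm_exp_smul_le_of_norm_exp_smul_lt_one
    (a := A) (T := k) (by positivity) (by rwa [Nat.cast_smul_eq_nsmul, Matrix.exp_nsmul])
  refine ⟨⟨c, hc, α, hα, hbound⟩, squeeze_zero_norm' ((eventually_ge_atTop 0).mono hbound) ?_⟩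
  simpa [neg_mul] using (Real.tendsto_exp_neg_atTop_nhds_zero.comp
    (tendsto_id.const_mul_atTop hα)).const_mul c
end

section
/- Let A ∈ ℝ^{N×N} be Hurwitz, B ∈ ℝ^{N×M} and C ∈ ℝ^{M×N}, and let W_X = ∫₀^∞ exp(tA) B C exp(tA) dt be the cross Gramian. Then W_X solves the Sylvester matrix equation A·W_X + W_X·A = −B·C. -/
open MeasureTheory Matrix NormedSpace

attribute [local instance] Matrix.normedAddCommGroup Matrix.normedSpace

/-!
On a generalized eigenspace for `μ`, `exp (t • A)` acts as `e^{tμ}` times a polynomial in `t`,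
so for a Hurwitz matrix `exp (t • A) = O(e^{-εt})` for some `ε > 0`. Hence
`F t = exp (t • A) * B * C * exp (t • A)` is integrable on `(0, ∞)` and tends to `0`, while
`F' = A F + F A`. The map `W ↦ A W + W A` is continuous linear, so it commutes with the integral,
and `A W_X + W_X A = ∫₀^∞ F' = 0 - F 0 = -B C`.
-/

open Filter Asymptotics Topology Set Nat

theorem ContinuousLinearMap.apply_integral_Ioi_eq_neg_of_hasDerivAt {E : Type*}
    [NormedAddCommGroup E] [NormedSpace ℝ E] [CompleteSpace E] (L : E →L[ℝ] E) {F : ℝ → E}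
    {a : ℝ} (hderiv : ∀ t ∈ Ici a, HasDerivAt F (L (F t)) t) (hF : IntegrableOn F (Ioi a))
    (hlim : Tendsto F atTop (𝓝 0)) :
    L (∫ t in Ioi a, F t) = -F a := by
  rw [← L.integral_comp_comm hF, integral_Ioi_of_hasDerivAt_of_tendsto' hderiv
    (L.integrable_comp hF) hlim, zero_sub]

theorem integrableOn_Ioi_of_isBigO_exp_neg {E : Type*} [NormedAddCommGroup E] {f : ℝ → E}
    {a b : ℝ} (hb : 0 < b) (hf : ContinuousOn f (Ici a))
    (ho : f =O[atTop] fun x => Real.exp (-b * x)) : IntegrableOn f (Ioi a) :=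
  integrableOn_Ici_iff_integrableOn_Ioi (by finiteness) |>.mp <|
    (hf.locallyIntegrableOn measurableSet_Ici).integrableOn_of_isBigO_atTop
    ho ⟨Ioi b, Ioi_mem_atTop b, exp_neg_integrableOn_Ioi b hb⟩

theorem isBigO_pow_mul_exp_of_lt (m : ℕ) {r s : ℝ} (h : r < s) :
    (fun t => t ^ m * Real.exp (r * t)) =O[atTop] fun t => Real.exp (s * t) := by
  refine ((isLittleO_pow_exp_pos_mul_atTop m (sub_pos.2 h)).mul_isBigO
    (isBigO_refl (fun t => Real.exp (r * t)) atTop)).isBigO.congr_right fun t => ?_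
  rw [← Real.exp_add]
  ring_nf

theorem hasDerivAt_exp_smul_mul_mul_exp_smul {𝕂 𝔸 : Type*} [RCLike 𝕂] [NormedRing 𝔸]
    [NormedAlgebra 𝕂 𝔸] [CompleteSpace 𝔸] (a x b : 𝔸) (t : 𝕂) :
    HasDerivAt (fun s : 𝕂 => exp (s • a) * x * exp (s • b))
      (a * (exp (t • a) * x * exp (t • b)) + exp (t • a) * x * exp (t • b) * b) t := by
  refine (((hasDerivAt_exp_smul_const' a t).mul_const x).mul
    (hasDerivAt_exp_smul_const b t)).congr_deriv ?_
  simp only [mul_assoc]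

theorem Set.Finite.exists_pos_forall_re_lt_neg {S : Set ℂ} (hS : S.Finite)
    (h : ∀ μ ∈ S, μ.re < 0) : ∃ ε > 0, ∀ μ ∈ S, μ.re < -ε := by
  have : ∀ᶠ ε in 𝓝[>] (0 : ℝ), ∀ μ ∈ S, μ.re < -ε :=
    hS.eventually_all.2 fun μ hμ => nhdsWithin_le_nhds <|
      (eventually_lt_nhds (neg_pos.2 (h μ hμ))).mono fun ε hε => lt_neg.1 hε
  exact (this.and self_mem_nhdsWithin).exists.imp fun ε h => ⟨h.2, h.1⟩

theorem Module.End.mem_spectrum_of_mem_maxGenEigenspace {K V : Type*} [Field K]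
    [AddCommGroup V] [Module K V] {f : Module.End K V} {μ : K} {v : V}
    (hv : v ∈ f.maxGenEigenspace μ) (hv0 : v ≠ 0) : μ ∈ spectrum K f := by
  have : f.HasUnifEigenvalue μ ⊤ := fun h => hv0 (by simpa [h] using hv)
  exact (this.lt zero_lt_one).mem_spectrum

theorem Matrix.norm_mul_le_card_mul {l m n α : Type*} [Fintype l] [Fintype m] [Fintype n]
    [NormedRing α] (A : Matrix l m α) (B : Matrix m n α) :
    ‖A * B‖ ≤ Fintype.card m * ‖A‖ * ‖B‖ := by
  refine (Matrix.norm_le_iff (by positivity)).2 fun i j => ?_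
  calc ‖(A * B) i j‖ ≤ ∑ k, ‖A i k‖ * ‖B k j‖ :=
        (norm_sum_le _ _).trans (Finset.sum_le_sum fun k _ => norm_mul_le _ _)
    _ ≤ ∑ _k : m, ‖A‖ * ‖B‖ := by gcongr <;> exact norm_entry_le_entrywise_sup_norm _
    _ = _ := by simp [mul_assoc]

theorem Asymptotics.IsBigO.matrix_mul {ι l m n α : Type*} [Fintype l] [Fintype m] [Fintype n]
    [NormedRing α] {f : ι → Matrix l m α} {g : ι → Matrix m n α} {u v : ι → ℝ} {k : Filter ι}
    (hf : f =O[k] u) (hg : g =O[k] v) : (fun x => f x * g x) =O[k] fun x => u x * v x := by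
  refine (IsBigO.of_bound (Fintype.card m) (.of_forall fun x => ?_)).trans
    (hf.norm_left.mul hg.norm_left)
  simpa [mul_assoc] using Matrix.norm_mul_le_card_mul (f x) (g x)

namespace Matrix

variable {n 𝕂 : Type*} [Fintype n] [DecidableEq n] [RCLike 𝕂]

/- The entrywise sup norm in force here is not submultiplicative, so the Banach-algebra facts
about `exp` are imported through the `L∞` operator norm, which induces the same topology. -/
theorem hasSum_exp (X : Matrix n n 𝕂) : HasSum (fun m => (m !⁻¹ : 𝕂) • X ^ m) (exp X) := by
  let _ : NormedRing (Matrix n n 𝕂) := Matrix.linftyOpNormedRing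
  let _ : NormedAlgebra 𝕂 (Matrix n n 𝕂) := Matrix.linftyOpNormedAlgebra
  have : @CompleteSpace (Matrix n n 𝕂) PseudoMetricSpace.toUniformSpace :=
    FiniteDimensional.complete 𝕂 _
  exact exp_series_hasSum_exp' X

theorem hasDerivAt_exp_smul_mul_mul_exp_smul (A X A' : Matrix n n 𝕂) (t : 𝕂) :
    HasDerivAt (fun s : 𝕂 => exp (s • A) * X * exp (s • A'))
      (A * (exp (t • A) * X * exp (t • A')) + exp (t • A) * X * exp (t • A') * A') t := by
  let _ : NormedRing (Matrix n n 𝕂) := Matrix.linftyOpNormedRing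
  let _ : NormedAlgebra 𝕂 (Matrix n n 𝕂) := Matrix.linftyOpNormedAlgebra
  have : @CompleteSpace (Matrix n n 𝕂) PseudoMetricSpace.toUniformSpace :=
    FiniteDimensional.complete 𝕂 _
  exact _root_.hasDerivAt_exp_smul_mul_mul_exp_smul A X A' t

theorem exp_mulVec_eq_sum_of_pow_mulVec_eq_zero {X : Matrix n n 𝕂} {v : n → 𝕂} {k : ℕ}
    (hk : X ^ k *ᵥ v = 0) :
    exp X *ᵥ v = ∑ m ∈ Finset.range k, (m !⁻¹ : 𝕂) • (X ^ m *ᵥ v) := by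
  have hs := (hasSum_exp X).map (mulVec.addMonoidHomLeft v)
    (continuous_id.matrix_mulVec continuous_const)
  simp only [Function.comp_def, mulVec.addMonoidHomLeft, AddMonoidHom.coe_mk, ZeroHom.coe_mk,
    smul_mulVec] at hs
  refine hs.unique (hasSum_sum_of_ne_finset_zero fun m hm => ?_)
  obtain ⟨j, rfl⟩ := Nat.exists_eq_add_of_le (not_lt.1 (Finset.mem_range.not.1 hm))
  rw [add_comm, pow_add, ← mulVec_mulVec, hk, mulVec_zero, smul_zero]

theorem exp_smul_one (c : 𝕂) : exp (c • (1 : Matrix n n 𝕂)) = exp c • 1 := by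
  rw [smul_one_eq_diagonal, exp_diagonal, Pi.exp_def, smul_one_eq_diagonal]

theorem map_ofReal_exp (A : Matrix n n ℝ) :
    (exp A).map Complex.ofReal = exp (A.map Complex.ofReal) := by
  refine ((hasSum_exp A).map (Complex.ofRealHom.mapMatrix : Matrix n n ℝ →+* Matrix n n ℂ)
    (continuous_id.matrix_map Complex.continuous_ofReal)).unique ?_
  convert hasSum_exp (A.map Complex.ofReal) using 2 with m
  simp [Matrix.map_smul' _ _ _ (map_mul Complex.ofRealHom), Matrix.map_pow]
  rfl

theorem isBigO_exp_smul_mulVec_of_mem_maxGenEigenspace {A : Matrix n n ℂ} {μ : ℂ} {s : ℝ}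
    (hμ : μ.re < s) {v : n → ℂ} (hv : v ∈ Module.End.maxGenEigenspace (toLin' A) μ) :
    (fun t : ℝ => exp (t • A) *ᵥ v) =O[atTop] fun t => Real.exp (s * t) := by
  obtain ⟨k, hk⟩ := (Module.End.mem_maxGenEigenspace _ _ _).1 hv
  set N := A - μ • (1 : Matrix n n ℂ)
  have hNk : N ^ k *ᵥ v = 0 := by
    have hN : toLin' (N ^ k) = (toLin' A - μ • 1) ^ k := by
      simp [N, toLin'_pow, Module.End.one_eq_id]
    rw [← toLin'_apply, hN, hk]
  have hexp : ∀ t : ℝ, exp (t • A) *ᵥ v =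
      ∑ m ∈ Finset.range k, exp (t • μ) • ((m !⁻¹ : ℂ) • (t ^ m • (N ^ m *ᵥ v))) := by
    intro t
    have hsplit : t • A = (t • μ) • (1 : Matrix n n ℂ) + t • N := by
      simp only [N, smul_sub, smul_assoc, add_sub_cancel]
    have htN : (t • N) ^ k *ᵥ v = 0 := by rw [smul_pow, smul_mulVec, hNk, smul_zero]
    rw [hsplit, exp_add_of_commute _ _ (((Commute.one_left N).smul_left _).smul_right _),
      exp_smul_one, smul_mul_assoc, one_mul, smul_mulVec,
      exp_mulVec_eq_sum_of_pow_mulVec_eq_zero htN, Finset.smul_sum]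
    simp [smul_pow, smul_mulVec]
  simp_rw [hexp]
  refine IsBigO.fun_sum fun m _ => (IsBigO.trans ?_ (isBigO_pow_mul_exp_of_lt m hμ))
  refine IsBigO.of_bound ((m !⁻¹ : ℝ) * ‖N ^ m *ᵥ v‖) (.of_forall fun t => le_of_eq ?_)
  rw [norm_smul, norm_smul, norm_smul, ← Complex.exp_eq_exp_ℂ, Complex.norm_exp, norm_mul,
    Real.norm_of_nonneg (Real.exp_pos _).le, Complex.smul_re, norm_inv, Complex.norm_natCast,
    smul_eq_mul, mul_comm t]
  ring

theorem isBigO_exp_smul_mulVec {A : Matrix n n ℂ} {s : ℝ} (hA : ∀ μ ∈ spectrum ℂ A, μ.re < s)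
    (v : n → ℂ) : (fun t : ℝ => exp (t • A) *ᵥ v) =O[atTop] fun t => Real.exp (s * t) := by
  have hv : v ∈ ⨆ μ, Module.End.maxGenEigenspace (toLin' A) μ := by
    rw [Module.End.iSup_maxGenEigenspace_eq_top]; trivial
  induction hv using Submodule.iSup_induction' with
  | mem μ v hv =>
    rcases eq_or_ne v 0 with rfl | hv0
    · simp only [mulVec_zero]; exact isBigO_zero _ _
    refine isBigO_exp_smul_mulVec_of_mem_maxGenEigenspace (hA μ ?_) hv
    rw [← spectrum_toLin']
    exact Module.End.mem_spectrum_of_mem_maxGenEigenspace hv hv0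
  | zero => simp only [mulVec_zero]; exact isBigO_zero _ _
  | add x y _ _ hx hy => simpa [mulVec_add] using hx.add hy

theorem isBigO_exp_smul {A : Matrix n n ℂ} {s : ℝ} (hA : ∀ μ ∈ spectrum ℂ A, μ.re < s) :
    (fun t : ℝ => exp (t • A)) =O[atTop] fun t => Real.exp (s * t) := by
  refine isBigO_pi.2 fun i => isBigO_pi.2 fun j => ?_
  simpa [mulVec_single_one] using isBigO_pi.1 (isBigO_exp_smul_mulVec hA (Pi.single j 1)) i

end Matrix

theorem IsHurwitz.exists_isBigO_exp_smul {N : ℕ} {A : Matrix (Fin N) (Fin N) ℝ}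
    (hA : IsHurwitz A) :
    ∃ ε > 0, (fun t : ℝ => exp (t • A)) =O[atTop] fun t => Real.exp (-ε * t) := by
  obtain ⟨ε, hε, hre⟩ := (Matrix.finite_spectrum _).exists_pos_forall_re_lt_neg hA
  refine ⟨ε, hε, isBigO_norm_left.1 ?_⟩
  refine (isBigO_norm_left.2 (Matrix.isBigO_exp_smul hre)).congr_left fun t => ?_
  rw [← Matrix.map_smul _ _ fun a => Complex.ofReal_mul t a, ← Matrix.map_ofReal_exp,
    Matrix.norm_map_eq _ _ Complex.norm_real]

/-- The cross Gramian `W_X = ∫₀^∞ exp(tA) B C exp(tA) dt` solves the Sylvester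
equation `A W_X + W_X A = -B C`. -/
theorem crossGramian_solves_sylvester {N M : ℕ}
    (A : Matrix (Fin N) (Fin N) ℝ) (B : Matrix (Fin N) (Fin M) ℝ)
    (C : Matrix (Fin M) (Fin N) ℝ) (hA : IsHurwitz A) :
    A * (∫ t in Set.Ioi (0 : ℝ), exp (t • A) * B * C * exp (t • A)) +
        (∫ t in Set.Ioi (0 : ℝ), exp (t • A) * B * C * exp (t • A)) * A =
      -(B * C) := by
  obtain ⟨ε, hε, hdecay⟩ := hA.exists_isBigO_exp_smul
  set F : ℝ → Matrix (Fin N) (Fin N) ℝ := fun t => exp (t • A) * (B * C) * exp (t • A)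
  have hexp_tendsto : Tendsto (fun t => Real.exp (-ε * t)) atTop (𝓝 0) :=
    Real.tendsto_exp_atBot.comp (tendsto_id.const_mul_atTop_of_neg (neg_lt_zero.2 hε))
  have hF_isBigO : F =O[atTop] fun t => Real.exp (-ε * t) := by
    simpa using (hdecay.matrix_mul (isBigO_const_one ℝ (B * C) atTop)).matrix_mul
      (hdecay.trans (hexp_tendsto.isBigO_one ℝ))
  have hF_deriv : ∀ t, HasDerivAt F (A * F t + F t * A) t :=
    Matrix.hasDerivAt_exp_smul_mul_mul_exp_smul A (B * C) A
  let L : Matrix (Fin N) (Fin N) ℝ →L[ℝ] Matrix (Fin N) (Fin N) ℝ :=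
    (LinearMap.mulLeft ℝ A + LinearMap.mulRight ℝ A).toContinuousLinearMap
  have hL := L.apply_integral_Ioi_eq_neg_of_hasDerivAt (a := 0) (fun t _ => hF_deriv t)
    (integrableOn_Ioi_of_isBigO_exp_neg hε
      (continuous_iff_continuousAt.2 fun t => (hF_deriv t).continuousAt).continuousOn hF_isBigO)
    (hF_isBigO.trans_tendsto hexp_tendsto)
  have hW : (fun t => exp (t • A) * B * C * exp (t • A)) = F := by
    ext1 t; simp only [F, Matrix.mul_assoc]
  have hF0 : F 0 = B * C := by simp [F]
  rw [hW, ← hF0]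
  exact hL
end

section
/- Let (A, B, C) be a symmetric linear system: A ∈ ℝ^{N×N} Hurwitz, B ∈ ℝ^{N×M}, C ∈ ℝ^{M×N}, and there exists a symmetric invertible matrix P with P·A = Aᵀ·P and P·B = Cᵀ. Then the square of the cross Gramian equals the product of the controllability and observability Gramians: W_X·W_X = W_C·W_O. Consequently the multiset of complex eigenvalues (with algebraic multiplicity) of W_C·W_O equals the multiset of squares of the eigenvalues of W_X, so the Hankel singular values σ_i = √λ_i(W_C·W_O) satisfy σ_i = |λ_i(W_X)|. -/
/-!
Symmetry lets `P` intertwine the system with its dual: `P e^{tA} = e^{tAᵀ} P` and `C = Bᵀ P`.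
Hence the integrands of `W_X` and `W_O` are those of `W_C` multiplied by `P`, so that
`W_X = W_C P`, `W_O = P W_C P` and `W_X² = W_C P W_C P = W_C W_O`.
Since `W_C` is positive semidefinite it has a symmetric square root `S`, and `W_X = S (S P)` has
the characteristic polynomial of the symmetric matrix `H = S P S`, while `W_X²` has that of `H²`.
The spectral theorem for `H` then shows that the eigenvalues of `W_X` are real and that those
of `W_C W_O` are their squares.
-/

open MeasureTheory Matrix NormedSpace

attribute [local instance] Matrix.normedAddCommGroup Matrix.normedSpace

theorem SemiconjBy.matrix_exp {n 𝕂 : Type*} [Fintype n] [DecidableEq n] [RCLike 𝕂]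
    {P A B : Matrix n n 𝕂} (h : SemiconjBy P A B) : SemiconjBy P (exp A) (exp B) := by
  open scoped Norms.Operator in exact h.exp_right

theorem ContinuousLinearMap.integral_nonneg_of_map_nonneg {α E : Type*} [MeasurableSpace α]
    {μ : Measure α} [NormedAddCommGroup E] [NormedSpace ℝ E] [CompleteSpace E] (L : E →L[ℝ] ℝ)
    {f : α → E} (hf : ∀ x, 0 ≤ L (f x)) : 0 ≤ L (∫ x, f x ∂μ) := by
  by_cases hint : Integrable f μ
  · rw [← L.integral_comp_comm hint]
    exact integral_nonneg hf
  · rw [integral_undef hint, map_zero]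

namespace Matrix

variable {n : Type*} [Fintype n]

section Integral

variable {α : Type*} [MeasurableSpace α] {μ : Measure α}

theorem PosSemidef.integral {f : α → Matrix n n ℝ} (hf : ∀ x, (f x).PosSemidef) :
    (∫ x, f x ∂μ).PosSemidef := by
  refine .of_dotProduct_mulVec_nonneg ?_ fun v => ?_
  · rw [IsHermitian, conjTranspose_eq_transpose_of_trivial]
    calc (∫ x, f x ∂μ)ᵀ = ∫ x, (f x)ᵀ ∂μ :=
          ((transposeLinearEquiv n n ℝ ℝ).toContinuousLinearEquiv.integral_comp_comm f).symm
      _ = ∫ x, f x ∂μ := by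
          simp_rw [← conjTranspose_eq_transpose_of_trivial, (hf _).isHermitian.eq]
  · let q : Matrix n n ℝ →ₗ[ℝ] ℝ :=
      { toFun := fun Y => star v ⬝ᵥ (Y *ᵥ v)
        map_add' := fun Y Z => by simp only [add_mulVec, dotProduct_add]
        map_smul' := fun c Y => by simp only [smul_mulVec, dotProduct_smul, RingHom.id_apply] }
    exact q.toContinuousLinearMap.integral_nonneg_of_map_nonneg
      fun x => (hf x).dotProduct_mulVec_nonneg v

variable [DecidableEq n]

theorem integral_mul_of_isUnit {P : Matrix n n ℝ} (hP : IsUnit P) (f : α → Matrix n n ℝ) :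
    ∫ x, f x * P ∂μ = (∫ x, f x ∂μ) * P := by
  obtain ⟨u, rfl⟩ := hP
  exact (u.mulRightLinearEquiv ℝ).toContinuousLinearEquiv.integral_comp_comm f

theorem integral_isUnit_mul {P : Matrix n n ℝ} (hP : IsUnit P) (f : α → Matrix n n ℝ) :
    ∫ x, P * f x ∂μ = P * ∫ x, f x ∂μ := by
  obtain ⟨u, rfl⟩ := hP
  exact (Units.mulLeftLinearEquiv ℝ _ u).toContinuousLinearEquiv.integral_comp_comm f

end Integral

variable [DecidableEq n]

theorem charpoly_mul_mul_self_comm {R : Type*} [CommRing R] (A B : Matrix n n R) :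
    (A * B * (A * B)).charpoly = (B * A * (B * A)).charpoly := by
  rw [show A * B * (A * B) = A * (B * A * B) by simp only [mul_assoc], charpoly_mul_comm]
  simp only [mul_assoc]

theorem charpoly_map_congr {R S : Type*} [CommRing R] [CommRing S] (f : R →+* S)
    {M M' : Matrix n n R} (h : M.charpoly = M'.charpoly) :
    (M.map f).charpoly = (M'.map f).charpoly := by
  rw [charpoly_map, charpoly_map, h]

open scoped ComplexOrder in
theorem PosSemidef.exists_isHermitian_mul_self_eq {𝕜 : Type*} [RCLike 𝕜] {W : Matrix n n 𝕜}
    (hW : W.PosSemidef) : ∃ S : Matrix n n 𝕜, S.IsHermitian ∧ S * S = W := by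
  open scoped MatrixOrder in
  exact ⟨CFC.sqrt W, (CFC.sqrt_nonneg W).posSemidef.isHermitian,
    CFC.sqrt_mul_sqrt_self W hW.nonneg⟩

namespace IsHermitian

variable {𝕜 : Type*} [RCLike 𝕜] {A : Matrix n n 𝕜}

theorem roots_charpoly_mul_self (hA : A.IsHermitian) :
    (A * A).charpoly.roots = A.charpoly.roots.map (· ^ 2) := by
  have hsq : A * A = cfc (fun x : ℝ => x ^ 2) A := by
    rw [cfc_pow_id A 2 hA.isSelfAdjoint, sq]
  rw [hsq, hA.charpoly_cfc_eq, Polynomial.roots_prod _ _ (Finset.prod_ne_zero_iff.mpr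
    fun i _ => Polynomial.X_sub_C_ne_zero _), hA.roots_charpoly_eq_eigenvalues, Multiset.map_map]
  simp only [Polynomial.roots_X_sub_C, Multiset.bind_singleton, Function.comp_apply,
    RCLike.ofReal_pow]

theorem map_sqrt_re_roots_charpoly_mul_self (hA : A.IsHermitian) :
    (A * A).charpoly.roots.map (fun z => √(RCLike.re z)) = A.charpoly.roots.map (‖·‖) := by
  rw [hA.roots_charpoly_mul_self, hA.roots_charpoly_eq_eigenvalues]
  simp only [Multiset.map_map, Function.comp_apply]
  congr 1
  ext i
  simp [Real.sqrt_sq_eq_abs]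

end IsHermitian

end Matrix

section Gramian

variable {n m : Type*} [Fintype n] [DecidableEq n] [Fintype m]

theorem controllabilityGramian_integrand_posSemidef (A : Matrix n n ℝ) (B : Matrix n m ℝ)
    (t : ℝ) : (exp (t • A) * B * Bᵀ * exp (t • Aᵀ)).PosSemidef := by
  have hG : (exp (t • A) * B)ᴴ = Bᵀ * exp (t • Aᵀ) := by
    rw [conjTranspose_eq_transpose_of_trivial, transpose_mul, ← exp_transpose, transpose_smul]
  have hGG := posSemidef_self_mul_conjTranspose (exp (t • A) * B)
  rwa [hG, ← Matrix.mul_assoc] at hGG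

variable {A P : Matrix n n ℝ} {B : Matrix n m ℝ} {C : Matrix m n ℝ}

theorem crossGramian_integrand_eq (hPA : P * A = Aᵀ * P) (hC : C = Bᵀ * P) (t : ℝ) :
    exp (t • A) * B * C * exp (t • A) = exp (t • A) * B * Bᵀ * exp (t • Aᵀ) * P := by
  rw [hC]
  simp only [Matrix.mul_assoc, (SemiconjBy.smul_right hPA t).matrix_exp.eq]

theorem observabilityGramian_integrand_eq (hPA : P * A = Aᵀ * P) (hPB : P * B = Cᵀ)
    (hC : C = Bᵀ * P) (t : ℝ) :
    exp (t • Aᵀ) * Cᵀ * C * exp (t • A) = P * (exp (t • A) * B * Bᵀ * exp (t • Aᵀ)) * P := by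
  have hexp : P * exp (t • A) = exp (t • Aᵀ) * P := (SemiconjBy.smul_right hPA t).matrix_exp
  rw [← hPB, hC]
  simp only [Matrix.mul_assoc, hexp]
  simp only [← Matrix.mul_assoc, ← hexp]

end Gramian

theorem crossGramian_sq_eq_gramian_prod_general {N M : ℕ}
    (A : Matrix (Fin N) (Fin N) ℝ) (B : Matrix (Fin N) (Fin M) ℝ)
    (C : Matrix (Fin M) (Fin N) ℝ)
    (P : Matrix (Fin N) (Fin N) ℝ) (hPsymm : Pᵀ = P) (hPinv : IsUnit P)
    (hPA : P * A = Aᵀ * P) (hPB : P * B = Cᵀ)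
    (WX WC WO : Matrix (Fin N) (Fin N) ℝ)
    (hWX : WX = ∫ t in Set.Ioi (0 : ℝ), NormedSpace.exp (t • A) * B * C * NormedSpace.exp (t • A))
    (hWC : WC = ∫ t in Set.Ioi (0 : ℝ), NormedSpace.exp (t • A) * B * Bᵀ * NormedSpace.exp (t • Aᵀ))
    (hWO : WO = ∫ t in Set.Ioi (0 : ℝ), NormedSpace.exp (t • Aᵀ) * Cᵀ * C * NormedSpace.exp (t • A)) :
    WX * WX = WC * WO ∧
      ((WC * WO).map Complex.ofReal).charpoly.roots =
        (WX.map Complex.ofReal).charpoly.roots.map (fun z => z ^ 2) ∧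
      ((WC * WO).map Complex.ofReal).charpoly.roots.map (fun z => Real.sqrt z.re) =
        (WX.map Complex.ofReal).charpoly.roots.map (fun z => ‖z‖) := by
  have hC : C = Bᵀ * P := by rw [← hPsymm, ← transpose_mul, hPB, transpose_transpose]
  have hWXC : WX = WC * P := by
    simp_rw [hWX, hWC, crossGramian_integrand_eq hPA hC, integral_mul_of_isUnit hPinv]
  have hWOC : WO = P * WC * P := by
    simp_rw [hWO, hWC, observabilityGramian_integrand_eq hPA hPB hC,
      integral_mul_of_isUnit hPinv, integral_isUnit_mul hPinv]
  have hsq : WX * WX = WC * WO := by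
    rw [hWXC, hWOC]
    simp only [mul_assoc]
  have hWCpsd : WC.PosSemidef :=
    hWC ▸ PosSemidef.integral (controllabilityGramian_integrand_posSemidef A B)
  obtain ⟨S, hS, hSS⟩ := hWCpsd.exists_isHermitian_mul_self_eq
  have hP : P.IsHermitian := by rwa [IsHermitian, conjTranspose_eq_transpose_of_trivial]
  set H := S * P * S
  have hH : (H.map Complex.ofReal).IsHermitian :=
    (hS.eq ▸ isHermitian_mul_mul_conjTranspose S hP).map _ fun x => by simp
  have hWXS : WX = S * (S * P) := by rw [hWXC, ← hSS, mul_assoc]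
  have hX : (WX.map Complex.ofReal).charpoly = (H.map Complex.ofReal).charpoly :=
    charpoly_map_congr Complex.ofRealHom (hWXS ▸ charpoly_mul_comm _ _)
  have hCO : ((WC * WO).map Complex.ofReal).charpoly = ((H * H).map Complex.ofReal).charpoly :=
    charpoly_map_congr Complex.ofRealHom (hsq ▸ hWXS ▸ charpoly_mul_mul_self_comm _ _)
  have hmap : (H * H).map Complex.ofReal = H.map Complex.ofReal * H.map Complex.ofReal :=
    Matrix.map_mul (f := Complex.ofRealHom)
  rw [hX, hCO, hmap]
  exact ⟨hsq, hH.roots_charpoly_mul_self, hH.map_sqrt_re_roots_charpoly_mul_self⟩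

/-- For a symmetric system, `W_X² = W_C W_O`; consequently the multiset of complex
eigenvalues of `W_C W_O` is the multiset of squares of the eigenvalues of `W_X`,
and the Hankel singular values `σᵢ = √λᵢ(W_C W_O)` satisfy `σᵢ = |λᵢ(W_X)|`. -/
theorem crossGramian_sq_eq_gramian_prod {N M : ℕ}
    (A : Matrix (Fin N) (Fin N) ℝ) (B : Matrix (Fin N) (Fin M) ℝ)
    (C : Matrix (Fin M) (Fin N) ℝ) (hA : IsHurwitz A)
    (P : Matrix (Fin N) (Fin N) ℝ) (hPsymm : Pᵀ = P) (hPinv : IsUnit P)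
    (hPA : P * A = Aᵀ * P) (hPB : P * B = Cᵀ)
    (WX WC WO : Matrix (Fin N) (Fin N) ℝ)
    (hWX : WX = ∫ t in Set.Ioi (0 : ℝ), NormedSpace.exp (t • A) * B * C * NormedSpace.exp (t • A))
    (hWC : WC = ∫ t in Set.Ioi (0 : ℝ), NormedSpace.exp (t • A) * B * Bᵀ * NormedSpace.exp (t • Aᵀ))
    (hWO : WO = ∫ t in Set.Ioi (0 : ℝ), NormedSpace.exp (t • Aᵀ) * Cᵀ * C * NormedSpace.exp (t • A)) :
    WX * WX = WC * WO ∧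
      ((WC * WO).map Complex.ofReal).charpoly.roots =
        (WX.map Complex.ofReal).charpoly.roots.map (fun z => z ^ 2) ∧
      ((WC * WO).map Complex.ofReal).charpoly.roots.map (fun z => Real.sqrt z.re) =
        (WX.map Complex.ofReal).charpoly.roots.map (fun z => ‖z‖) :=
  crossGramian_sq_eq_gramian_prod_general A B C P hPsymm hPinv hPA hPB WX WC WO hWX hWC hWO
end
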